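/- For every integer K ≥ 1, the partial sum satisfies ∑_{k=1}^{K} arctan(b_k) = π/4 − π/2^{K+2}. -/

import Mathlib

/-!
The recurrence is the one of `Real.sqrtTwoAddSeries 0`, so `a k = 2 cos (π / 2 ^ (k + 1))` and
`√(2 - a k) = 2 sin (π / 2 ^ (k + 2))`. Hence `b k = tan (π / 2 ^ (k + 2))`, and the sum of the
arctangents is the geometric sum `∑ π / 2 ^ (k + 2)`.
-/

open Real Filter Topology

theorem eq_sqrtTwoAddSeries_of_rec {a : ℕ → ℝ} (ha1 : a 1 = √2)
    (ha : ∀ k ≥ 1, a (k + 1) = √(2 + a k)) : ∀ k ≥ 1, a k = sqrtTwoAddSeries 0 k := by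
  intro k hk
  induction k, hk using Nat.le_induction with
  | base => rw [ha1, sqrtTwoAddSeries_one]
  | succ k hk ih => rw [ha k hk, ih, sqrtTwoAddSeries]

theorem tan_pi_div_two_pow_add_two (n : ℕ) :
    tan (π / 2 ^ (n + 2)) = √(2 - sqrtTwoAddSeries 0 n) / sqrtTwoAddSeries 0 (n + 1) := by
  rw [tan_eq_sin_div_cos, sin_pi_over_two_pow_succ, cos_pi_over_two_pow (n + 1),
    div_div_div_cancel_right₀ two_ne_zero]

theorem arctan_tan_pi_div_two_pow_add_two (n : ℕ) :
    arctan (tan (π / 2 ^ (n + 2))) = π / 2 ^ (n + 2) := by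
  have hpow : (2 : ℝ) ^ 1 < 2 ^ (n + 2) := pow_lt_pow_right₀ one_lt_two (by omega)
  have hpos : 0 < π / 2 ^ (n + 2) := by positivity
  apply arctan_tan
  · linarith [pi_pos]
  · exact div_lt_div_of_pos_left pi_pos two_pos (by simpa using hpow)

theorem sum_Icc_div_two_pow_add_two (x : ℝ) (K : ℕ) :
    ∑ k ∈ Finset.Icc 1 K, x / 2 ^ (k + 2) = x / 4 - x / 2 ^ (K + 2) := by
  induction K with
  | zero => norm_num
  | succ K ih =>
    rw [Finset.sum_Icc_succ_top (by omega), ih, pow_succ _ (K + 2)]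
    ring

theorem partial_sum_arctan_b (a : ℕ → ℝ)
    (ha1 : a 1 = Real.sqrt 2)
    (ha : ∀ k ≥ 1, a (k + 1) = Real.sqrt (2 + a k))
    (b : ℕ → ℝ)
    (hb : ∀ k ≥ 1, b k = Real.sqrt (2 - a k) / a (k + 1)) :
    ∀ K ≥ 1, ∑ k ∈ Finset.Icc 1 K, Real.arctan (b k) = π / 4 - π / 2 ^ (K + 2) := by
  intro K _
  have ha_series := eq_sqrtTwoAddSeries_of_rec ha1 ha
  have harctan : ∀ k ∈ Finset.Icc 1 K, arctan (b k) = π / 2 ^ (k + 2) := by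
    intro k hk
    have hk1 : 1 ≤ k := (Finset.mem_Icc.mp hk).1
    rw [hb k hk1, ha_series k hk1, ha_series (k + 1) (by omega), ← tan_pi_div_two_pow_add_two,
      arctan_tan_pi_div_two_pow_add_two]
  rw [Finset.sum_congr rfl harctan, sum_Icc_div_two_pow_add_two]
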